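/- arXiv:1709.04221 — 2 statements merged into one kernel-verified Lean document; each statement's English description precedes it below -/
import Mathlib

section
/- Suppose nonnegative real sequences (ξ_t), (u_t) and summable nonnegative sequences (η_t), (μ_t) satisfy ξ_{t+1} ≤ (1+η_t)ξ_t - u_t + μ_t for all t. Then (ξ_t) converges and ∑_t u_t < ∞. (Deterministic Robbins–Siegmund lemma.) -/
/-!
Dividing by the convergent products `P t = ∏_{s<t} (1 + η s)` turns the recursion into
`W (t+1) ≤ W t - v t + m t` for `W = ξ / P`, `v t = u t / P (t+1)`, `m t = μ t / P (t+1)`.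
Then `W t + ∑_{s<t} (v s - m s)` is antitone and bounded below, which gives summability
of `v` and convergence of `W`; since `1 ≤ P t ≤ exp (∑ η)` and `P` converges, this transfers
back to `u` and `ξ`.
-/

open Filter Finset Topology

section AlmostSupermartingale

variable {W v m : ℕ → ℝ}

lemma add_sum_range_sub_antitone (hrec : ∀ t, W (t + 1) ≤ W t - v t + m t) :
    Antitone fun t => W t + ∑ s ∈ range t, (v s - m s) := by
  refine antitone_nat_of_succ_le fun t => ?_
  simp only [sum_range_succ]
  linarith [hrec t]

theorem summable_and_tendsto_of_le_sub_add (hW : ∀ t, 0 ≤ W t) (hv : ∀ t, 0 ≤ v t)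
    (hm : Summable m) (hrec : ∀ t, W (t + 1) ≤ W t - v t + m t) :
    Summable v ∧ ∃ l, Tendsto W atTop (𝓝 l) := by
  have hanti := add_sum_range_sub_antitone hrec
  obtain ⟨M, hM⟩ := hm.hasSum.tendsto_sum_nat.bddAbove_range
  have hmM : ∀ t, ∑ s ∈ range t, m s ≤ M := fun t => hM ⟨t, rfl⟩
  have hvs : Summable v := by
    refine summable_of_sum_range_le hv (c := W 0 + M) fun t => ?_
    have hle := hanti (Nat.zero_le t)
    simp only [sum_sub_distrib, range_zero, sum_empty, sub_zero, add_zero] at hle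
    linarith [hW t, hmM t]
  refine ⟨hvs, ?_⟩
  have hbdd : BddBelow (Set.range fun t => W t + ∑ s ∈ range t, (v s - m s)) := by
    refine ⟨-M, ?_⟩
    rintro _ ⟨t, rfl⟩
    simp only [sum_sub_distrib]
    linarith [hW t, hmM t, sum_nonneg fun s (_ : s ∈ range t) => hv s]
  have hpartial := (hvs.sub hm).hasSum.tendsto_sum_nat
  exact ⟨_, by simpa using (tendsto_atTop_ciInf hanti hbdd).sub hpartial⟩

end AlmostSupermartingale

section OneAddProd

variable {η : ℕ → ℝ}

lemma one_le_prod_range_one_add (hη : ∀ t, 0 ≤ η t) (t : ℕ) :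
    1 ≤ ∏ s ∈ range t, (1 + η s) :=
  Finset.one_le_prod fun s _ => le_add_of_nonneg_right (hη s)

lemma prod_range_one_add_le_exp_tsum (hη : ∀ t, 0 ≤ η t) (hηs : Summable η) (t : ℕ) :
    ∏ s ∈ range t, (1 + η s) ≤ Real.exp (∑' s, η s) :=
  (Real.prod_one_add_le_exp_sum _ hη).trans <|
    Real.exp_le_exp.mpr (hηs.sum_le_tsum _ fun s _ => hη s)

lemma tendsto_prod_range_one_add (hηs : Summable η) :
    ∃ p, Tendsto (fun t => ∏ s ∈ range t, (1 + η s)) atTop (𝓝 p) :=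
  ⟨_, (Real.multipliable_one_add_of_summable hηs).tendsto_prod_tprod_nat⟩

end OneAddProd

theorem robbins_siegmund_deterministic_general (ξ u η μ : ℕ → ℝ)
    (hξ : ∀ t, 0 ≤ ξ t) (hu : ∀ t, 0 ≤ u t) (hη : ∀ t, 0 ≤ η t)
    (hηs : Summable η) (hμs : Summable μ)
    (hrec : ∀ t, ξ (t + 1) ≤ (1 + η t) * ξ t - u t + μ t) :
    (∃ l : ℝ, Filter.Tendsto ξ Filter.atTop (nhds l)) ∧ Summable u := by
  set P : ℕ → ℝ := fun t => ∏ s ∈ range t, (1 + η s)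
  have hP1 : ∀ t, 1 ≤ P t := one_le_prod_range_one_add hη
  have hP0 : ∀ t, 0 < P t := fun t => one_pos.trans_le (hP1 t)
  have hm : Summable fun t => μ t / P (t + 1) := by
    refine hμs.abs.of_norm_bounded fun t => ?_
    rw [Real.norm_eq_abs, abs_div, abs_of_pos (hP0 _)]
    exact div_le_self (abs_nonneg _) (hP1 _)
  have hWrec : ∀ t, ξ (t + 1) / P (t + 1) ≤ ξ t / P t - u t / P (t + 1) + μ t / P (t + 1) := by
    intro t
    have hη1 : 1 + η t ≠ 0 := by linarith [hη t]
    calc ξ (t + 1) / P (t + 1) ≤ ((1 + η t) * ξ t - u t + μ t) / P (t + 1) :=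
          div_le_div_of_nonneg_right (hrec t) (hP0 _).le
      _ = _ := by
          simp only [P, prod_range_succ]
          field_simp [(hP0 t).ne']
  obtain ⟨hv, l, hW⟩ := summable_and_tendsto_of_le_sub_add
    (fun t => div_nonneg (hξ t) (hP0 t).le) (fun t => div_nonneg (hu t) (hP0 _).le) hm hWrec
  obtain ⟨p, hP⟩ := tendsto_prod_range_one_add hηs
  refine ⟨⟨l * p, (hW.mul hP).congr fun t => div_mul_cancel₀ _ (hP0 t).ne'⟩, ?_⟩
  refine (hv.mul_left (Real.exp (∑' s, η s))).of_nonneg_of_le hu fun t => ?_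
  calc u t = P (t + 1) * (u t / P (t + 1)) := (mul_div_cancel₀ _ (hP0 _).ne').symm
    _ ≤ _ := mul_le_mul_of_nonneg_right (prod_range_one_add_le_exp_tsum hη hηs _)
          (div_nonneg (hu t) (hP0 _).le)

theorem robbins_siegmund_deterministic (ξ u η μ : ℕ → ℝ)
    (hξ : ∀ t, 0 ≤ ξ t) (hu : ∀ t, 0 ≤ u t) (hη : ∀ t, 0 ≤ η t)
    (hμ : ∀ t, 0 ≤ μ t) (hηs : Summable η) (hμs : Summable μ)
    (hrec : ∀ t, ξ (t + 1) ≤ (1 + η t) * ξ t - u t + μ t) :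
    (∃ l : ℝ, Filter.Tendsto ξ Filter.atTop (nhds l)) ∧ Summable u :=
  robbins_siegmund_deterministic_general ξ u η μ hξ hu hη hηs hμs hrec
end

section
/- Deterministic coupled supermartingale lemma: let (ξ_t), (ζ_t), (u_t) be nonnegative real sequences, (θ_t) a sequence in [0,1], and (η_t), (μ_t), (ν_t) summable nonnegative sequences, with c > 0, satisfying ξ_{t+1} ≤ (1+η_t)ξ_t - u_t + cθ_tζ_t + μ_t and ζ_{t+1} ≤ (1-θ_t)ζ_t + ν_t for all t. Then (ξ_t) and (ζ_t) converge, ∑_t u_t < ∞, and ∑_t θ_t ζ_t < ∞. -/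
open Filter

private lemma aux_conv (d e : ℕ → ℝ) (hd : ∀ t, 0 ≤ d t) (he : ∀ t, 0 ≤ e t)
    (hes : Summable e) (hrec : ∀ t, d (t + 1) ≤ d t + e t) :
    ∃ l : ℝ, Tendsto d atTop (nhds l) := by
  set b : ℕ → ℝ := fun t => d t - ∑ s ∈ Finset.range t, e s with hb
  have hanti : Antitone b := antitone_nat_of_succ_le (fun t => by
    simp only [hb, Finset.sum_range_succ]
    linarith [hrec t])
  have hbdd : BddBelow (Set.range b) := by
    refine ⟨-(∑' s, e s), ?_⟩
    rintro x ⟨t, rfl⟩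
    have h1 : ∑ s ∈ Finset.range t, e s ≤ ∑' s, e s :=
      Summable.sum_le_tsum _ (fun s _ => he s) hes
    have := hd t
    simp only [hb]
    linarith
  obtain ⟨l, hl⟩ : ∃ l, Tendsto b atTop (nhds l) :=
    ⟨_, tendsto_atTop_ciInf hanti hbdd⟩
  refine ⟨l + ∑' s, e s, ?_⟩
  have hsum : Tendsto (fun t => ∑ s ∈ Finset.range t, e s) atTop (nhds (∑' s, e s)) :=
    hes.hasSum.tendsto_sum_nat
  have := hl.add hsum
  convert this using 1
  funext t
  simp [hb]

private lemma aux_summable (g d e : ℕ → ℝ) (hg : ∀ t, 0 ≤ g t) (hd : ∀ t, 0 ≤ d t)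
    (he : ∀ t, 0 ≤ e t) (hes : Summable e)
    (hrec : ∀ t, g t ≤ d t - d (t + 1) + e t) : Summable g := by
  apply summable_of_sum_range_le (c := d 0 + ∑' s, e s) hg
  intro T
  have key : ∑ t ∈ Finset.range T, g t ≤ d 0 - d T + ∑ t ∈ Finset.range T, e t := by
    induction T with
    | zero => simp
    | succ T ih =>
        rw [Finset.sum_range_succ, Finset.sum_range_succ]
        linarith [hrec T]
  have h1 : ∑ t ∈ Finset.range T, e t ≤ ∑' s, e s :=
    Summable.sum_le_tsum _ (fun s _ => he s) hes
  linarith [hd T]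

theorem coupled_supermartingale_deterministic (ξ ζ u θ η μ ν : ℕ → ℝ) (c : ℝ)
    (hc : 0 < c) (hξ : ∀ t, 0 ≤ ξ t) (hζ : ∀ t, 0 ≤ ζ t) (hu : ∀ t, 0 ≤ u t)
    (hθ0 : ∀ t, 0 ≤ θ t) (hθ1 : ∀ t, θ t ≤ 1)
    (hη : ∀ t, 0 ≤ η t) (hμ : ∀ t, 0 ≤ μ t) (hν : ∀ t, 0 ≤ ν t)
    (hηs : Summable η) (hμs : Summable μ) (hνs : Summable ν)
    (hrec1 : ∀ t, ξ (t + 1) ≤ (1 + η t) * ξ t - u t + c * θ t * ζ t + μ t)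
    (hrec2 : ∀ t, ζ (t + 1) ≤ (1 - θ t) * ζ t + ν t) :
    (∃ l : ℝ, Filter.Tendsto ξ Filter.atTop (nhds l)) ∧
    (∃ l : ℝ, Filter.Tendsto ζ Filter.atTop (nhds l)) ∧
    Summable u ∧ Summable (fun t => θ t * ζ t) := by
  -- ζ converges
  have hζconv : ∃ l : ℝ, Tendsto ζ atTop (nhds l) := by
    refine aux_conv ζ ν hζ hν hνs (fun t => ?_)
    nlinarith [hrec2 t, mul_nonneg (hθ0 t) (hζ t)]
  -- Summable θζ
  have hθζs : Summable (fun t => θ t * ζ t) := by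
    refine aux_summable _ ζ ν (fun t => mul_nonneg (hθ0 t) (hζ t)) hζ hν hνs (fun t => ?_)
    nlinarith [hrec2 t]
  -- combined sequence
  set w : ℕ → ℝ := fun t => ξ t + c * ζ t with hw
  have hw0 : ∀ t, 0 ≤ w t := fun t =>
    add_nonneg (hξ t) (mul_nonneg hc.le (hζ t))
  set β : ℕ → ℝ := fun t => μ t + c * ν t with hβ
  have hβ0 : ∀ t, 0 ≤ β t := fun t => add_nonneg (hμ t) (mul_nonneg hc.le (hν t))
  have hβs : Summable β := hμs.add (hνs.mul_left c)
  have hwrec : ∀ t, w (t + 1) ≤ (1 + η t) * w t - u t + β t := by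
    intro t
    have h2 := mul_le_mul_of_nonneg_left (hrec2 t) hc.le
    have h3 : 0 ≤ c * (η t * ζ t) := mul_nonneg hc.le (mul_nonneg (hη t) (hζ t))
    simp only [hw, hβ]
    nlinarith [hrec1 t]
  -- boundedness of w
  set M : ℝ := (w 0 + ∑' t, β t) * Real.exp (∑' t, η t) with hM
  have hwbd : ∀ t, w t ≤ M := by
    have key : ∀ t, w t ≤ (w 0 + ∑ s ∈ Finset.range t, β s) * ∏ s ∈ Finset.range t, (1 + η s) := by
      intro t
      induction t with
      | zero => simp
      | succ t ih =>
          have hP1 : (1 : ℝ) ≤ ∏ s ∈ Finset.range t, (1 + η s) := by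
            calc (1 : ℝ) = ∏ s ∈ Finset.range t, (1 : ℝ) := by simp
              _ ≤ ∏ s ∈ Finset.range t, (1 + η s) :=
                  Finset.prod_le_prod (fun s _ => zero_le_one)
                    (fun s _ => le_add_of_nonneg_right (hη s))
          have hηt : (1 : ℝ) ≤ 1 + η t := by linarith [hη t]
          have h1 : w (t + 1) ≤ (1 + η t) * w t + β t := by
            have := hwrec t
            linarith [hu t]
          have h2 : (1 + η t) * w t ≤
              (1 + η t) * ((w 0 + ∑ s ∈ Finset.range t, β s) * ∏ s ∈ Finset.range t, (1 + η s)) :=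
            mul_le_mul_of_nonneg_left ih (by linarith [hη t])
          have h3 : β t ≤ β t * ((∏ s ∈ Finset.range t, (1 + η s)) * (1 + η t)) :=
            le_mul_of_one_le_right (hβ0 t) (by nlinarith [hP1, hηt])
          rw [Finset.sum_range_succ, Finset.prod_range_succ]
          nlinarith
    intro t
    have hB : ∑ s ∈ Finset.range t, β s ≤ ∑' s, β s := Summable.sum_le_tsum _ (fun s _ => hβ0 s) hβs
    have hP0 : (0 : ℝ) ≤ ∏ s ∈ Finset.range t, (1 + η s) :=
      Finset.prod_nonneg (fun s _ => by linarith [hη s])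
    have hPe : ∏ s ∈ Finset.range t, (1 + η s) ≤ Real.exp (∑' s, η s) := by
      calc ∏ s ∈ Finset.range t, (1 + η s) ≤ ∏ s ∈ Finset.range t, Real.exp (η s) :=
            Finset.prod_le_prod (fun s _ => by linarith [hη s])
              (fun s _ => by linarith [Real.add_one_le_exp (η s)])
        _ = Real.exp (∑ s ∈ Finset.range t, η s) := by rw [Real.exp_sum]
        _ ≤ Real.exp (∑' s, η s) :=
            Real.exp_le_exp.mpr (Summable.sum_le_tsum _ (fun s _ => hη s) hηs)
    calc w t ≤ (w 0 + ∑ s ∈ Finset.range t, β s) * ∏ s ∈ Finset.range t, (1 + η s) := key t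
      _ ≤ (w 0 + ∑' s, β s) * Real.exp (∑' s, η s) := by
          apply mul_le_mul (by linarith) hPe hP0
          have h0 : (0 : ℝ) ≤ ∑' s, β s := tsum_nonneg hβ0
          linarith [hw0 0]
  -- linearized recursion
  set γ : ℕ → ℝ := fun t => M * η t + β t with hγ
  have hγ0 : ∀ t, 0 ≤ γ t := by
    intro t
    have hM0 : 0 ≤ M := le_trans (hw0 0) (hwbd 0)
    exact add_nonneg (mul_nonneg hM0 (hη t)) (hβ0 t)
  have hγs : Summable γ := (hηs.mul_left M).add hβs
  have hwrec' : ∀ t, w (t + 1) ≤ w t - u t + γ t := by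
    intro t
    have h1 := hwrec t
    have h2 : η t * w t ≤ η t * M := mul_le_mul_of_nonneg_left (hwbd t) (hη t)
    simp only [hγ]
    nlinarith
  -- Summable u
  have hus : Summable u :=
    aux_summable u w γ hu hw0 hγ0 hγs (fun t => by linarith [hwrec' t])
  -- w converges
  obtain ⟨lw, hlw⟩ : ∃ l : ℝ, Tendsto w atTop (nhds l) :=
    aux_conv w γ hw0 hγ0 hγs (fun t => by linarith [hwrec' t, hu t])
  obtain ⟨lz, hlz⟩ := hζconv
  -- ξ converges
  have hξconv : ∃ l : ℝ, Tendsto ξ atTop (nhds l) := by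
    refine ⟨lw - c * lz, ?_⟩
    have := hlw.sub (hlz.const_mul c)
    convert this using 1
    funext t
    simp only [hw]
    ring
  exact ⟨hξconv, ⟨lz, hlz⟩, hus, hθζs⟩
end
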